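/- arXiv:2505.24546 — 2 statements merged into one kernel-verified Lean document; each statement's English description precedes it below -/
import Mathlib

section
/- Let q be a positive integer and h(x) = x^4 + a x^3 + b x^2 + a q x + q^2 a q-Weil polynomial of degree 4. Then h has a real root if and only if |a| = 4√q or b = −2q + 2√q·|a|. -/
/-!
Each conjugate pair `w, w̄` of roots contributes the real factor `x² - s x + q` with
`s = 2 Re w`, so `|s| ≤ 2√q`, and this factor has a real root exactly when `|s| = 2√q`.
Writing `h = (x² - s x + q)(x² - t x + q)` gives `a = -(s + t)` and `b = s t + 2q`; hence
`b + 2q - 2√q |a|` equals `(s - 2√q)(t - 2√q)` or `(s + 2√q)(t + 2√q)` according to the sign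
of `s + t`, and it vanishes iff `s` or `t` is `±2√q`; while `|a| = 4√q` forces `s = t = ±2√q`.
-/

open Polynomial

/-- `h` is a `q`-Weil polynomial of degree `2*g`: its complex roots consist of
`g` conjugate pairs, each of complex absolute value `√q`. -/
def IsWeil (q g : ℕ) (h : Polynomial ℤ) : Prop :=
  ∃ w : Fin g → ℂ,
    (∀ i, ‖w i‖ = Real.sqrt q) ∧
    h.map (Int.castRingHom ℂ) =
      ∏ i, ((Polynomial.X - Polynomial.C (w i)) *
            (Polynomial.X - Polynomial.C ((starRingEnd ℂ) (w i))))

theorem Polynomial.coeff_quartic_eq {R : Type*} [CommRing R] {c₃ c₂ c₁ c₀ d₃ d₂ d₁ d₀ : R}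
    (h : X ^ 4 + C c₃ * X ^ 3 + C c₂ * X ^ 2 + C c₁ * X + C c₀ =
      X ^ 4 + C d₃ * X ^ 3 + C d₂ * X ^ 2 + C d₁ * X + C d₀) :
    c₃ = d₃ ∧ c₂ = d₂ ∧ c₁ = d₁ ∧ c₀ = d₀ := by
  have hcoeff (n : ℕ) := congrArg (coeff · n) h
  refine ⟨?_, ?_, ?_, ?_⟩
  · simpa [coeff_X, coeff_C, coeff_X_pow] using hcoeff 3
  · simpa [coeff_X, coeff_C, coeff_X_pow] using hcoeff 2
  · simpa [coeff_X, coeff_C, coeff_X_pow] using hcoeff 1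
  · simpa [coeff_X, coeff_C, coeff_X_pow] using hcoeff 0

theorem Complex.X_sub_C_mul_X_sub_C_conj (w : ℂ) :
    (X - C w) * (X - C ((starRingEnd ℂ) w)) =
      (X ^ 2 - C (2 * w.re) * X + C (Complex.normSq w)).map Complex.ofRealHom := by
  calc (X - C w) * (X - C ((starRingEnd ℂ) w))
      = X ^ 2 - C (w + (starRingEnd ℂ) w) * X + C (w * (starRingEnd ℂ) w) := by
        simp only [map_add, map_mul]; ring
    _ = _ := by
        rw [Complex.add_conj, Complex.mul_conj]
        simp [Polynomial.map_sub, Polynomial.map_add]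

theorem IsWeil.exists_map_real_eq_prod {q g : ℕ} {h : ℤ[X]} (hW : IsWeil q g h) :
    ∃ s : Fin g → ℝ, (∀ i, |s i| ≤ 2 * √q) ∧
      h.map (Int.castRingHom ℝ) = ∏ i, (X ^ 2 - C (s i) * X + C (q : ℝ)) := by
  obtain ⟨w, hw, hprod⟩ := hW
  refine ⟨fun i => 2 * (w i).re, fun i => ?_, ?_⟩
  · rw [abs_mul, abs_two, ← hw i]
    gcongr
    exact Complex.abs_re_le_norm (w i)
  · apply map_injective Complex.ofRealHom Complex.ofReal_injective
    have hnormSq : ∀ i, Complex.normSq (w i) = q := fun i => by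
      rw [Complex.normSq_eq_norm_sq, hw i, Real.sq_sqrt q.cast_nonneg]
    rw [map_map, RingHom.ext_int (Complex.ofRealHom.comp _) (Int.castRingHom ℂ), hprod,
      Polynomial.map_prod]
    simp only [Complex.X_sub_C_mul_X_sub_C_conj, hnormSq]

theorem exists_root_quadratic_iff {r s : ℝ} (hs : |s| ≤ 2 * r) :
    (∃ x : ℝ, x ^ 2 - s * x + r ^ 2 = 0) ↔ |s| = 2 * r := by
  have hr : 0 ≤ 2 * r := (abs_nonneg s).trans hs
  constructor
  · rintro ⟨x, hx⟩
    have : (2 * r) ^ 2 ≤ |s| ^ 2 := by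
      rw [sq_abs]; nlinarith [sq_nonneg (2 * x - s)]
    exact le_antisymm hs ((sq_le_sq₀ hr (abs_nonneg s)).1 this)
  · intro h
    have : s ^ 2 = (2 * r) ^ 2 := by rw [← sq_abs, h]
    exact ⟨s / 2, by linear_combination -this / 4⟩

theorem abs_eq_or_abs_eq_iff {r s t : ℝ} (hs : |s| ≤ 2 * r) (ht : |t| ≤ 2 * r) :
    (|s| = 2 * r ∨ |t| = 2 * r) ↔
      (|s + t| = 4 * r ∨ s * t + 4 * r ^ 2 = 2 * r * |s + t|) := by
  have hr : 0 ≤ 2 * r := (abs_nonneg s).trans hs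
  rw [abs_le] at hs ht
  constructor
  · rintro (h | h) <;> right <;> rcases (abs_eq hr).1 h with rfl | rfl
    · rw [abs_of_nonneg (by linarith)]; ring
    · rw [abs_of_nonpos (by linarith)]; ring
    · rw [abs_of_nonneg (by linarith)]; ring
    · rw [abs_of_nonpos (by linarith)]; ring
  · simp only [abs_eq hr]
    rintro (h | h)
    · rcases (abs_eq (by linarith)).1 h with h | h
      · left; left; linarith
      · left; right; linarith
    · rcases le_or_gt 0 (s + t) with hst | hst
      · rw [abs_of_nonneg hst] at h
        have : (s - 2 * r) * (t - 2 * r) = 0 := by linear_combination h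
        rcases mul_eq_zero.1 this with h | h
        · left; left; linarith
        · right; left; linarith
      · rw [abs_of_neg hst] at h
        have : (s + 2 * r) * (t + 2 * r) = 0 := by linear_combination h
        rcases mul_eq_zero.1 this with h | h
        · left; right; linarith
        · right; right; linarith

theorem IsWeil.exists_quartic_factorization {q : ℕ} {a b : ℤ}
    (hW : IsWeil q 2 (X ^ 4 + C a * X ^ 3 + C b * X ^ 2 + C (a * q) * X + C ((q : ℤ) ^ 2))) :
    ∃ s t : ℝ, |s| ≤ 2 * √q ∧ |t| ≤ 2 * √q ∧ (a : ℝ) = -(s + t) ∧ (b : ℝ) = s * t + 2 * q ∧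
      ∀ x : ℝ, aeval x (X ^ 4 + C a * X ^ 3 + C b * X ^ 2 + C (a * q) * X + C ((q : ℤ) ^ 2)) =
        (x ^ 2 - s * x + q) * (x ^ 2 - t * x + q) := by
  obtain ⟨s, hs, hmap⟩ := hW.exists_map_real_eq_prod
  rw [Fin.prod_univ_two] at hmap
  refine ⟨s 0, s 1, hs 0, hs 1, ?_⟩
  have hquartic : (X ^ 2 - C (s 0) * X + C (q : ℝ)) * (X ^ 2 - C (s 1) * X + C (q : ℝ)) =
      X ^ 4 + C (-(s 0 + s 1)) * X ^ 3 + C (s 0 * s 1 + 2 * q) * X ^ 2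
        + C (-(s 0 + s 1) * q) * X + C ((q : ℝ) ^ 2) := by
    simp only [C_neg, C_add, C_mul, C_pow, C_ofNat]; ring
  have hmap_expanded := hmap
  simp only [Polynomial.map_add, Polynomial.map_mul, Polynomial.map_pow, map_X, map_C,
    hquartic] at hmap_expanded
  simp only [eq_intCast, Int.cast_mul, Int.cast_pow, Int.cast_natCast] at hmap_expanded
  obtain ⟨ha, hb, -⟩ := coeff_quartic_eq hmap_expanded
  refine ⟨ha, hb, fun x => ?_⟩
  rw [aeval_def, eval₂_eq_eval_map, algebraMap_int_eq, hmap]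
  simp

theorem stmt16_general (q : ℕ) (a b : ℤ)
    (hW : IsWeil q 2
      (X ^ 4 + C a * X ^ 3 + C b * X ^ 2 + C (a * q) * X + C ((q : ℤ) ^ 2))) :
    (∃ x : ℝ, Polynomial.aeval x
        (X ^ 4 + C a * X ^ 3 + C b * X ^ 2 + C (a * q) * X + C ((q : ℤ) ^ 2)) = 0) ↔
      (|(a : ℝ)| = 4 * Real.sqrt q ∨
        (b : ℝ) = -2 * q + 2 * Real.sqrt q * |(a : ℝ)|) := by
  obtain ⟨s, t, hs, ht, ha, hb, heval⟩ := hW.exists_quartic_factorization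
  have hq_sq : (q : ℝ) = √q ^ 2 := (Real.sq_sqrt q.cast_nonneg).symm
  simp_rw [heval, mul_eq_zero, exists_or]
  rw [hq_sq, exists_root_quadratic_iff hs, exists_root_quadratic_iff ht,
    abs_eq_or_abs_eq_iff hs ht, ha, hb, abs_neg, ← hq_sq]
  exact or_congr_right ⟨fun h => by linarith, fun h => by linarith⟩

theorem stmt16 (q : ℕ) (hq : 0 < q) (a b : ℤ)
    (hW : IsWeil q 2
      (X ^ 4 + C a * X ^ 3 + C b * X ^ 2 + C (a * q) * X + C ((q : ℤ) ^ 2))) :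
    (∃ x : ℝ, Polynomial.aeval x
        (X ^ 4 + C a * X ^ 3 + C b * X ^ 2 + C (a * q) * X + C ((q : ℤ) ^ 2)) = 0) ↔
      (|(a : ℝ)| = 4 * Real.sqrt q ∨
        (b : ℝ) = -2 * q + 2 * Real.sqrt q * |(a : ℝ)|) :=
  stmt16_general q a b hW
end

section
/- Let q be a positive integer and h a q-Weil polynomial of degree 6 that has a real root. If q is not a perfect square, then h(x) = (x^2 − q)^2 h_0(x) for some q-Weil polynomial h_0 of degree 2; if q is a perfect square, then h(x) = (x + √q)^{2k}(x − √q)^{2ℓ} h_1(x) where k, ℓ ≥ 0, k + ℓ ∈ {1, 2, 3}, and h_1 is a q-Weil polynomial of degree 6 − 2(k+ℓ) with no real roots (where a degree-0 polynomial means h_1 = 1). -/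
open Polynomial

/-!
A real root `x` of a `q`-Weil polynomial `h` is one of its roots `w i`, so `x = ±√q`.
If `q` is not a square, `x` is irrational, so the remainder of `h` modulo `X² - q`, an integer
polynomial of degree `≤ 1` vanishing at `x`, is zero; hence `√q` and `-√q` both occur among the
`w i`, and `h` is divisible by `(X² - q)²` with a quadratic Weil cofactor. If `q = s²`, one divides
`h` by the factors `(X ± s)²` of all roots `w i = ∓s`; the cofactor keeps the non-real pairs only.
In both cases the cofactor has integer coefficients because the divisor is monic.
-/

open Finset ComplexConjugate

noncomputable def weilFactor (z : ℂ) : ℂ[X] := (X - C z) * (X - C (conj z))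

lemma isWeil_iff {q g : ℕ} {h : ℤ[X]} :
    IsWeil q g h ↔ ∃ w : Fin g → ℂ, (∀ i, ‖w i‖ = √q) ∧
      h.map (Int.castRingHom ℂ) = ∏ i, weilFactor (w i) :=
  Iff.rfl

lemma weilFactor_of_conj_eq {z : ℂ} (hz : conj z = z) : weilFactor z = (X - C z) ^ 2 := by
  rw [weilFactor, hz, sq]

lemma prod_filter_weilFactor {ι : Type*} (s : Finset ι) (w : ι → ℂ) {z : ℂ} (hz : conj z = z) :
    ∏ i ∈ s with w i = z, weilFactor (w i) = (X - C z) ^ (2 * #{i ∈ s | w i = z}) := by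
  rw [prod_congr rfl fun i hi => by rw [(mem_filter.1 hi).2], prod_const,
    weilFactor_of_conj_eq hz, pow_mul]

lemma exists_eq_ofReal_of_eval_prod_weilFactor {ι : Type*} {s : Finset ι} {w : ι → ℂ} {x : ℝ}
    (hx : (∏ i ∈ s, weilFactor (w i)).eval (x : ℂ) = 0) : ∃ i ∈ s, w i = x := by
  simp only [eval_prod, prod_eq_zero_iff, weilFactor, eval_mul, eval_sub, eval_X, eval_C,
    mul_eq_zero, sub_eq_zero] at hx
  obtain ⟨i, hi, hx | hx⟩ := hx
  · exact ⟨i, hi, hx.symm⟩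
  · exact ⟨i, hi, by rw [← Complex.conj_ofReal, hx, Complex.conj_conj]⟩

lemma exists_eq_ofReal_of_aeval_eq_zero {ι : Type*} {s : Finset ι} {w : ι → ℂ} {h : ℤ[X]}
    (hh : h.map (Int.castRingHom ℂ) = ∏ i ∈ s, weilFactor (w i)) {x : ℝ}
    (hx : aeval x h = 0) : ∃ i ∈ s, w i = x := by
  refine exists_eq_ofReal_of_eval_prod_weilFactor ?_
  rw [← hh, ← algebraMap_int_eq, eval_map_algebraMap, ← Complex.coe_algebraMap,
    aeval_algebraMap_apply, hx, map_zero]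

lemma eq_sqrt_or_eq_neg_sqrt_of_norm_ofReal {q : ℕ} {x : ℝ} (hx : ‖(x : ℂ)‖ = √q) :
    x = √q ∨ x = -√q := by
  rwa [Complex.norm_real, Real.norm_eq_abs, abs_eq (Real.sqrt_nonneg _)] at hx

lemma isWeil_of_map_eq_prod {q : ℕ} {ι : Type*} [Fintype ι] {h : ℤ[X]} (w : ι → ℂ)
    (hw : ∀ i, ‖w i‖ = √q) (hh : h.map (Int.castRingHom ℂ) = ∏ i, weilFactor (w i)) :
    IsWeil q (Fintype.card ι) h := by
  let e := Fintype.equivFin ι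
  exact ⟨w ∘ e.symm, fun _ => hw _, hh.trans (e.symm.prod_comp (weilFactor ∘ w)).symm⟩

lemma exists_eq_mul_of_map_eq_mul {d h : ℤ[X]} {p : ℂ[X]}
    (hh : h.map (Int.castRingHom ℂ) = d.map (Int.castRingHom ℂ) * p)
    (hd : (d.map (Int.castRingHom ℂ)).Monic) :
    ∃ h₁ : ℤ[X], h = d * h₁ ∧ h₁.map (Int.castRingHom ℂ) = p := by
  have hinj : Function.Injective (Int.castRingHom ℂ) := fun a b hab => by simpa using hab
  obtain ⟨h₁, rfl⟩ := (map_dvd_map _ hinj (monic_of_injective hinj hd)).1 ⟨p, hh⟩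
  rw [Polynomial.map_mul] at hh
  exact ⟨h₁, rfl, mul_left_cancel₀ hd.ne_zero hh⟩

lemma exists_eq_mul_isWeil_of_map_eq_prod {q g : ℕ} {h d : ℤ[X]} {w : Fin g → ℂ}
    (hw : ∀ i, ‖w i‖ = √q) (hh : h.map (Int.castRingHom ℂ) = ∏ i, weilFactor (w i))
    (S : Finset (Fin g)) (hd : d.map (Int.castRingHom ℂ) = ∏ i ∈ S, weilFactor (w i)) :
    ∃ h₁ : ℤ[X], h = d * h₁ ∧ IsWeil q (g - #S) h₁ ∧
      h₁.map (Int.castRingHom ℂ) = ∏ i ∈ Sᶜ, weilFactor (w i) := by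
  have hdm : (d.map (Int.castRingHom ℂ)).Monic := by
    rw [hd]
    exact monic_prod_of_monic _ _ fun i _ => (monic_X_sub_C _).mul (monic_X_sub_C _)
  obtain ⟨h₁, rfl, hh₁⟩ :=
    exists_eq_mul_of_map_eq_mul (by rw [hh, hd, prod_mul_prod_compl]) hdm
  refine ⟨h₁, rfl, ?_, hh₁⟩
  have := isWeil_of_map_eq_prod (fun i : ↥Sᶜ => w i) (fun _ => hw _)
    (hh₁.trans (prod_coe_sort Sᶜ (weilFactor ∘ w)).symm)
  rwa [Fintype.card_coe, card_compl, Fintype.card_fin] at this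

lemma X_sq_sub_C_dvd_of_irrational {h : ℤ[X]} {n : ℤ} {x : ℝ} (hx : aeval x h = 0)
    (hx2 : x ^ 2 = n) (hirr : Irrational x) : X ^ 2 - C n ∣ h := by
  have hd : (X ^ 2 - C n).Monic := monic_X_pow_sub_C _ two_ne_zero
  set r := h %ₘ (X ^ 2 - C n)
  have hr : r = C (r.coeff 1) * X + C (r.coeff 0) := by
    refine eq_X_add_C_of_degree_le_one (Order.le_of_lt_succ ?_)
    have := degree_modByMonic_lt h hd
    rwa [degree_X_pow_sub_C two_pos] at this
  have hrx : (r.coeff 1 : ℝ) * x + r.coeff 0 = 0 := by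
    have := congrArg (aeval x) (modByMonic_add_div h (X ^ 2 - C n))
    change aeval x (r + _) = _ at this
    rw [hr] at this
    simpa [hx, hx2] using this
  have hr1 : r.coeff 1 = 0 := by
    by_contra hc
    refine hirr ⟨-r.coeff 0 / r.coeff 1, ?_⟩
    push_cast
    field_simp
    linear_combination -hrx
  have hr0 : r.coeff 0 = 0 := by simpa [hr1] using hrx
  rw [← modByMonic_eq_zero_iff_dvd hd]
  change r = 0
  rw [hr, hr1, hr0, C_0, zero_mul, zero_add]

lemma IsWeil.exists_eq_X_sq_sub_C_sq_mul {q g : ℕ} {h : ℤ[X]} (hW : IsWeil q g h) {x : ℝ}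
    (hx : aeval x h = 0) (hx2 : x ^ 2 = q) (hirr : Irrational x) :
    ∃ h₀ : ℤ[X], IsWeil q (g - 2) h₀ ∧ h = (X ^ 2 - C (q : ℤ)) ^ 2 * h₀ := by
  obtain ⟨w, hw, hh⟩ := isWeil_iff.1 hW
  have hnx : aeval (-x) h = 0 := by
    obtain ⟨f, rfl⟩ := X_sq_sub_C_dvd_of_irrational (n := q) hx (by exact_mod_cast hx2) hirr
    simp [hx2]
  obtain ⟨i, -, hi⟩ := exists_eq_ofReal_of_aeval_eq_zero hh hx
  obtain ⟨j, -, hj⟩ := exists_eq_ofReal_of_aeval_eq_zero hh hnx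
  have hij : i ≠ j := by
    rintro rfl
    exact hirr.ne_zero (by simpa [self_eq_neg] using hi.symm.trans hj)
  have hd : ((X ^ 2 - C (q : ℤ)) ^ 2).map (Int.castRingHom ℂ) =
      ∏ k ∈ {i, j}, weilFactor (w k) := by
    have hxC : (x : ℂ) ^ 2 = q := by exact_mod_cast hx2
    rw [prod_pair hij, hi, hj, weilFactor_of_conj_eq (Complex.conj_ofReal _),
      weilFactor_of_conj_eq (Complex.conj_ofReal _)]
    simp only [Polynomial.map_pow, Polynomial.map_sub, Polynomial.map_X, Polynomial.map_C]
    rw [eq_intCast, Int.cast_natCast, ← hxC, Complex.ofReal_neg, C_pow, C_neg]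
    ring
  obtain ⟨h₀, rfl, hW₀, -⟩ := exists_eq_mul_isWeil_of_map_eq_prod hw hh {i, j} hd
  exact ⟨h₀, by rwa [card_pair hij] at hW₀, rfl⟩

lemma IsWeil.exists_eq_X_add_C_pow_mul_X_sub_C_pow_mul {s g : ℕ} (hs : s ≠ 0) {h : ℤ[X]}
    (hW : IsWeil (s ^ 2) g h) :
    ∃ k l : ℕ, k + l ≤ g ∧ ∃ h₁ : ℤ[X], IsWeil (s ^ 2) (g - (k + l)) h₁ ∧
      (¬ ∃ x : ℝ, aeval x h₁ = 0) ∧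
      h = (X + C (s : ℤ)) ^ (2 * k) * (X - C (s : ℤ)) ^ (2 * l) * h₁ := by
  obtain ⟨w, hw, hh⟩ := isWeil_iff.1 hW
  set A : Finset (Fin g) := {i | w i = -s}
  set B : Finset (Fin g) := {i | w i = s}
  have hAB : Disjoint A B := by
    refine disjoint_filter.2 fun i _ hA hB => ?_
    rw [hA, neg_eq_iff_add_eq_zero, ← two_mul] at hB
    simp_all
  have hd : ((X + C (s : ℤ)) ^ (2 * #A) * (X - C (s : ℤ)) ^ (2 * #B)).map (Int.castRingHom ℂ) =
      ∏ i ∈ A ∪ B, weilFactor (w i) := by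
    rw [prod_union hAB, prod_filter_weilFactor _ _ (by simp),
      prod_filter_weilFactor _ _ (Complex.conj_natCast s)]
    simp [A, B, sub_eq_add_neg]
  obtain ⟨h₁, rfl, hW₁, hh₁⟩ := exists_eq_mul_isWeil_of_map_eq_prod hw hh (A ∪ B) hd
  rw [card_union_of_disjoint hAB] at hW₁
  have hcard : #A + #B ≤ g := by
    simpa [card_union_of_disjoint hAB] using card_le_univ (A ∪ B)
  refine ⟨#A, #B, hcard, h₁, hW₁, ?_, rfl⟩
  rintro ⟨x, hx⟩
  obtain ⟨i, hi, hix⟩ := exists_eq_ofReal_of_aeval_eq_zero hh₁ hx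
  have hxs := eq_sqrt_or_eq_neg_sqrt_of_norm_ofReal (hix ▸ hw i)
  rw [Nat.cast_pow, Real.sqrt_sq (Nat.cast_nonneg s)] at hxs
  refine mem_compl.1 hi ?_
  rcases hxs with rfl | rfl <;> simp [A, B, hix]

theorem stmt19 (q : ℕ) (hq : 0 < q) (h : Polynomial ℤ) (hW : IsWeil q 3 h)
    (hrr : ∃ x : ℝ, Polynomial.aeval x h = 0) :
    (¬ IsSquare q →
      ∃ h0 : Polynomial ℤ, IsWeil q 1 h0 ∧ h = (X ^ 2 - C (q : ℤ)) ^ 2 * h0) ∧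
    (IsSquare q →
      ∃ s k l : ℕ, s ^ 2 = q ∧ 1 ≤ k + l ∧ k + l ≤ 3 ∧
        ∃ h1 : Polynomial ℤ, IsWeil q (3 - (k + l)) h1 ∧
          (¬ ∃ x : ℝ, Polynomial.aeval x h1 = 0) ∧
          h = (X + C (s : ℤ)) ^ (2 * k) * (X - C (s : ℤ)) ^ (2 * l) * h1) := by
  refine ⟨fun hns => ?_, fun ⟨s, hs⟩ => ?_⟩
  · obtain ⟨w, hw, hh⟩ := isWeil_iff.1 hW
    obtain ⟨x, hx⟩ := hrr
    obtain ⟨i, -, hi⟩ := exists_eq_ofReal_of_aeval_eq_zero hh hx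
    have hirr := irrational_sqrt_natCast_iff.2 hns
    obtain rfl | rfl := eq_sqrt_or_eq_neg_sqrt_of_norm_ofReal (hi ▸ hw i)
    · exact hW.exists_eq_X_sq_sub_C_sq_mul hx (Real.sq_sqrt q.cast_nonneg) hirr
    · exact hW.exists_eq_X_sq_sub_C_sq_mul hx (by rw [neg_sq, Real.sq_sqrt q.cast_nonneg]) hirr.neg
  · obtain rfl : q = s ^ 2 := by rw [hs, sq]
    obtain ⟨k, l, hkl, h₁, hW₁, hnr, rfl⟩ :=
      hW.exists_eq_X_add_C_pow_mul_X_sub_C_pow_mul (by rintro rfl; simp at hq)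
    refine ⟨s, k, l, rfl, Nat.one_le_iff_ne_zero.2 fun hkl0 => hnr ?_, hkl, h₁, hW₁, hnr, rfl⟩
    obtain ⟨hk, hl⟩ := Nat.add_eq_zero_iff.1 hkl0
    simpa [hk, hl] using hrr
end
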